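/- For a positive integer n, let A_n be the (n+1)×(n+1) matrix with entries (A_n)_{jk} = |j − k| for 0 ≤ j, k ≤ n. Then A_n is invertible and its inverse satisfies 2 − π²/(2n²) ≤ ‖A_n^{−1}‖₂ ≤ 2, where ‖·‖₂ denotes the operator norm induced by the Euclidean vector norm. -/

import Mathlib

/-!
With `D` the forward-difference matrix and `e = e₀ + eₙ`, the inverse is explicit:
`A_n⁻¹ = e eᵀ / (2n) - DᵀD / 2`. Indeed `eᵀ A_n e_j = j + (n - j) = n`, while `D A_n e_j` is the
vector of signs of `i + 1/2 - j`, so `xᵀ Dᵀ D A_n e_j` telescopes to `x₀ + xₙ - 2 x_j`.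

The quadratic form of `A_n⁻¹` is `(x₀ + xₙ)² / (2n) - ½ ∑ (x_{i+1} - x_i)²`, which lies between
`-2 ‖x‖²` and `‖x‖²`; as `A_n⁻¹` is symmetric, its norm is the supremum of `|Rayleigh quotient|`,
so `‖A_n⁻¹‖ ≤ 2`. For the lower bound take `x_k = sin (k φ)` with `φ = π - π / n`: it vanishes
at `0` and `n` and satisfies `x_{k+1} + x_{k-1} = 2 cos φ · x_k`, which makes its Rayleigh quotient
`-(1 - cos φ) = -(1 + cos (π / n)) ≤ -(2 - π² / (2n²))`.
-/

/-- The Euclidean distance matrix of the points `0, 1, …, n` on the real line. -/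
noncomputable def distMat (n : ℕ) : Matrix (Fin (n + 1)) (Fin (n + 1)) ℝ :=
  Matrix.of fun j k => |((j : ℕ) : ℝ) - ((k : ℕ) : ℝ)|

open Finset Matrix Real
open scoped RealInnerProductSpace

lemma abs_succ_sub_sub_abs_sub (i j : ℕ) :
    |((i + 1 : ℕ) : ℝ) - j| - |(i : ℝ) - j| = if j ≤ i then 1 else -1 := by
  split_ifs with h
  · rw [abs_of_nonneg (by push_cast; linarith [(Nat.cast_le (α := ℝ)).2 h]),
      abs_of_nonneg (by linarith [(Nat.cast_le (α := ℝ)).2 h])]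
    push_cast; ring
  · have h' : ((i + 1 : ℕ) : ℝ) ≤ j := by exact_mod_cast (by omega : i + 1 ≤ j)
    rw [abs_of_nonpos (by linarith), abs_of_nonpos (by push_cast at h' ⊢; linarith)]
    push_cast; ring

lemma sum_range_sub_mul_sign (v : ℕ → ℝ) {j n : ℕ} (hj : j ≤ n) :
    ∑ i ∈ range n, (v (i + 1) - v i) * (if j ≤ i then 1 else -1) = v 0 + v n - 2 * v j := by
  have hsplit : ∀ i, (v (i + 1) - v i) * (if j ≤ i then 1 else -1) =
      (v (i + 1) - v i) - 2 * if i < j then v (i + 1) - v i else 0 := by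
    intro i; split_ifs <;> first | omega | ring
  have hfilter : {i ∈ range n | i < j} = range j := by ext; simp; omega
  rw [sum_congr rfl fun i _ => hsplit i, sum_sub_distrib, ← mul_sum, sum_ite, sum_const_zero,
    add_zero, hfilter, sum_range_sub, sum_range_sub]
  ring

lemma sum_range_sub_sq_le (v : ℕ → ℝ) (n : ℕ) :
    ∑ i ∈ range n, (v (i + 1) - v i) ^ 2 ≤
      2 * (2 * ∑ k ∈ range (n + 1), v k ^ 2 - v 0 ^ 2 - v n ^ 2) := by
  calc ∑ i ∈ range n, (v (i + 1) - v i) ^ 2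
      ≤ ∑ i ∈ range n, (2 * v (i + 1) ^ 2 + 2 * v i ^ 2) :=
        sum_le_sum fun i _ => by nlinarith [sq_nonneg (v (i + 1) + v i)]
    _ = 2 * (2 * ∑ k ∈ range (n + 1), v k ^ 2 - v 0 ^ 2 - v n ^ 2) := by
        rw [sum_add_distrib, ← mul_sum, ← mul_sum]
        linarith [sum_range_succ' (fun k => v k ^ 2) n, sum_range_succ (fun k => v k ^ 2) n]

lemma sq_zero_add_sq_le_sum_range (v : ℕ → ℝ) {n : ℕ} (hn : 0 < n) :
    v 0 ^ 2 + v n ^ 2 ≤ ∑ k ∈ range (n + 1), v k ^ 2 := by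
  rw [sum_range_succ]
  gcongr
  exact single_le_sum (fun k _ => sq_nonneg (v k)) (mem_range.2 hn)

lemma sum_range_sub_sq_of_recurrence (v : ℕ → ℝ) (c : ℝ)
    (hv : ∀ k, v (k + 2) + v k = 2 * c * v (k + 1)) {n : ℕ} (h0 : v 0 = 0) (hn : v n = 0) :
    ∑ i ∈ range n, (v (i + 1) - v i) ^ 2 = 2 * (1 - c) * ∑ k ∈ range (n + 1), v k ^ 2 := by
  set S := ∑ k ∈ range (n + 1), v k ^ 2
  set P := ∑ i ∈ range n, v i * v (i + 1)
  have hshift : ∑ i ∈ range n, v (i + 1) * v (i + 2) = P := by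
    have h := sum_range_succ' (fun i => v i * v (i + 1)) n
    rw [sum_range_succ, hn, h0] at h
    simpa [P] using h.symm
  have hsucc : ∑ i ∈ range n, v (i + 1) ^ 2 = S := by
    simp [S, sum_range_succ' (fun k => v k ^ 2) n, h0]
  have hself : ∑ i ∈ range n, v i ^ 2 = S := by
    simp [S, sum_range_succ (fun k => v k ^ 2) n, hn]
  have hP : P = c * S := by
    have h : ∑ i ∈ range n, v (i + 1) * (v (i + 2) + v i) = 2 * c * S := by
      simp only [hv, ← hsucc, mul_sum]
      exact sum_congr rfl fun i _ => by ring
    simp only [mul_add, sum_add_distrib, hshift] at h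
    rw [show ∑ i ∈ range n, v (i + 1) * v i = P from sum_congr rfl fun i _ => mul_comm _ _] at h
    linarith
  calc ∑ i ∈ range n, (v (i + 1) - v i) ^ 2
      = ∑ i ∈ range n, v (i + 1) ^ 2 + ∑ i ∈ range n, v i ^ 2 - 2 * P := by
        rw [mul_sum, ← sum_add_distrib, ← sum_sub_distrib]
        exact sum_congr rfl fun i _ => by ring
    _ = 2 * (1 - c) * S := by rw [hsucc, hself, hP]; ring

lemma sin_nat_add_two_mul_add_sin_nat_mul (φ : ℝ) (k : ℕ) :
    sin ((k + 2 : ℕ) * φ) + sin (k * φ) = 2 * cos φ * sin ((k + 1 : ℕ) * φ) := by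
  have h₁ := sin_add ((k + 1) * φ) φ
  have h₂ := sin_sub ((k + 1) * φ) φ
  rw [show (k + 1 : ℝ) * φ + φ = (k + 2) * φ by ring] at h₁
  rw [show (k + 1 : ℝ) * φ - φ = k * φ by ring] at h₂
  push_cast
  linarith

lemma Fin.exists_eq_nat_fun {α : Type*} [Zero α] {n : ℕ} (x : Fin n → α) :
    ∃ v : ℕ → α, x = fun i : Fin n => v i :=
  ⟨fun k => if h : k < n then x ⟨k, h⟩ else 0, by simp⟩

lemma ContinuousLinearMap.norm_le_of_abs_inner_self_le {E : Type*} [NormedAddCommGroup E]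
    [InnerProductSpace ℝ E] {T : E →L[ℝ] E} (hT : (T : E →ₗ[ℝ] E).IsSymmetric) {C : ℝ}
    (hC : 0 ≤ C) (h : ∀ x, |⟪T x, x⟫| ≤ C * ‖x‖ ^ 2) : ‖T‖ ≤ C := by
  rw [T.norm_eq_iSup_rayleighQuotient hT]
  refine ciSup_le fun x => ?_
  rcases eq_or_ne x 0 with rfl | hx
  · simpa using hC
  rw [rayleighQuotient, reApplyInnerSelf_apply, RCLike.re_to_real, abs_div, abs_sq,
    div_le_iff₀ (by positivity)]
  exact h x

noncomputable def forwardDiff (n : ℕ) : Matrix (Fin n) (Fin (n + 1)) ℝ :=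
  of fun i => Pi.single i.succ 1 - Pi.single i.castSucc 1

noncomputable def endpointSum (n : ℕ) : Fin (n + 1) → ℝ :=
  Pi.single 0 1 + Pi.single (Fin.last n) 1

noncomputable def distMatInv (n : ℕ) : Matrix (Fin (n + 1)) (Fin (n + 1)) ℝ :=
  (2 * n : ℝ)⁻¹ • vecMulVec (endpointSum n) (endpointSum n) -
    (2⁻¹ : ℝ) • ((forwardDiff n)ᵀ * forwardDiff n)

noncomputable def distMatInvQuadForm (n : ℕ) (v : ℕ → ℝ) : ℝ :=
  (v 0 + v n) ^ 2 / (2 * n) - (∑ i ∈ range n, (v (i + 1) - v i) ^ 2) / 2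

lemma abs_distMatInvQuadForm_le (v : ℕ → ℝ) {n : ℕ} (hn : 0 < n) :
    |distMatInvQuadForm n v| ≤ 2 * ∑ k ∈ range (n + 1), v k ^ 2 := by
  have henergy := sum_range_sub_sq_le v n
  have henergy_nonneg : 0 ≤ ∑ i ∈ range n, (v (i + 1) - v i) ^ 2 :=
    sum_nonneg fun i _ => sq_nonneg _
  have hends := sq_zero_add_sq_le_sum_range v hn
  have hcorner_nonneg : 0 ≤ (v 0 + v n) ^ 2 / (2 * n) := by positivity
  have hcorner : (v 0 + v n) ^ 2 / (2 * n) ≤ v 0 ^ 2 + v n ^ 2 := by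
    have hn1 : (1 : ℝ) ≤ n := by exact_mod_cast hn
    rw [div_le_iff₀ (by positivity)]
    nlinarith [sq_nonneg (v 0 - v n), sq_nonneg (v 0 + v n)]
  rw [distMatInvQuadForm, abs_le]
  constructor <;> linarith [sq_nonneg (v 0), sq_nonneg (v n)]

section

variable {n : ℕ}

lemma forwardDiff_mulVec (x : Fin (n + 1) → ℝ) (i : Fin n) :
    (forwardDiff n *ᵥ x) i = x i.succ - x i.castSucc := by
  change (Pi.single i.succ 1 - Pi.single i.castSucc 1) ⬝ᵥ x = _
  rw [sub_dotProduct, single_dotProduct, single_dotProduct, one_mul, one_mul]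

lemma forwardDiff_mulVec_dotProduct (v w : ℕ → ℝ) :
    (forwardDiff n *ᵥ fun i => v i) ⬝ᵥ (forwardDiff n *ᵥ fun i => w i) =
      ∑ i ∈ range n, (v (i + 1) - v i) * (w (i + 1) - w i) := by
  simp only [dotProduct, forwardDiff_mulVec, Fin.val_succ, Fin.val_castSucc]
  exact Fin.sum_univ_eq_sum_range (fun i => (v (i + 1) - v i) * (w (i + 1) - w i)) n

lemma endpointSum_dotProduct (x : Fin (n + 1) → ℝ) :
    endpointSum n ⬝ᵥ x = x 0 + x (Fin.last n) := by
  simp [endpointSum, add_dotProduct, single_dotProduct]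

lemma isHermitian_distMatInv : (distMatInv n).IsHermitian := by
  simp [isHermitian_iff_isSymm, IsSymm, distMatInv, transpose_vecMulVec]

lemma dotProduct_distMatInv_mulVec (x y : Fin (n + 1) → ℝ) :
    x ⬝ᵥ distMatInv n *ᵥ y = (2 * n : ℝ)⁻¹ * ((endpointSum n ⬝ᵥ x) * (endpointSum n ⬝ᵥ y)) -
      2⁻¹ * ((forwardDiff n *ᵥ x) ⬝ᵥ (forwardDiff n *ᵥ y)) := by
  simp only [distMatInv, sub_mulVec, smul_mulVec, dotProduct_sub, dotProduct_smul,
    vecMulVec_mulVec, ← mulVec_mulVec, dotProduct_mulVec x (forwardDiff n)ᵀ, vecMul_transpose]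
  simp [dotProduct_comm x]

lemma dotProduct_distMatInv_mulVec_distMat_col (hn : 0 < n) (x : Fin (n + 1) → ℝ)
    (j : Fin (n + 1)) : x ⬝ᵥ distMatInv n *ᵥ (fun k => distMat n k j) = x j := by
  obtain ⟨v, rfl⟩ := Fin.exists_eq_nat_fun x
  set w : ℕ → ℝ := fun m => |(m : ℝ) - (j : ℕ)| with hw
  have hcol : (fun k => distMat n k j) = fun k : Fin (n + 1) => w k := rfl
  have hends : w 0 + w n = n := by
    have : ((j : ℕ) : ℝ) ≤ n := by exact_mod_cast j.is_le
    simp only [hw, Nat.cast_zero, zero_sub, abs_neg, abs_of_nonneg (sub_nonneg.2 this),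
      abs_of_nonneg (Nat.cast_nonneg (α := ℝ) (j : ℕ))]
    ring
  rw [hcol, dotProduct_distMatInv_mulVec, endpointSum_dotProduct, endpointSum_dotProduct,
    forwardDiff_mulVec_dotProduct]
  simp only [Fin.val_zero, Fin.val_last, hw, abs_succ_sub_sub_abs_sub]
  rw [hends, sum_range_sub_mul_sign v j.is_le]
  field_simp
  ring

lemma distMatInv_mul_distMat (hn : 0 < n) : distMatInv n * distMat n = 1 := by
  ext k j
  calc (distMatInv n * distMat n) k j
      = Pi.single k 1 ⬝ᵥ distMatInv n *ᵥ (fun m => distMat n m j) := by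
        rw [single_dotProduct, one_mul]; rfl
    _ = (1 : Matrix (Fin (n + 1)) (Fin (n + 1)) ℝ) k j := by
        rw [dotProduct_distMatInv_mulVec_distMat_col hn, Pi.single_apply, one_apply]
        simp only [eq_comm]

lemma inner_toEuclideanCLM_distMatInv_self (v : ℕ → ℝ) :
    ⟪toEuclideanCLM (𝕜 := ℝ) (distMatInv n) (WithLp.toLp 2 fun i : Fin (n + 1) => v i),
      WithLp.toLp 2 fun i : Fin (n + 1) => v i⟫ = distMatInvQuadForm n v := by
  rw [real_inner_comm, inner_toEuclideanCLM, dotProduct_distMatInv_mulVec, endpointSum_dotProduct,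
    forwardDiff_mulVec_dotProduct, distMatInvQuadForm]
  simp only [Fin.val_zero, Fin.val_last, ← sq]
  ring

lemma norm_toLp_nat_fun_sq (v : ℕ → ℝ) :
    ‖WithLp.toLp 2 fun i : Fin (n + 1) => v i‖ ^ 2 = ∑ k ∈ range (n + 1), v k ^ 2 := by
  rw [EuclideanSpace.real_norm_sq_eq]
  exact Fin.sum_univ_eq_sum_range (fun k => v k ^ 2) (n + 1)

lemma norm_toEuclideanCLM_distMatInv_le (hn : 0 < n) :
    ‖toEuclideanCLM (𝕜 := ℝ) (distMatInv n)‖ ≤ 2 := by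
  refine ContinuousLinearMap.norm_le_of_abs_inner_self_le
    (isSymmetric_toEuclideanLin_iff.2 isHermitian_distMatInv) zero_le_two fun x => ?_
  obtain ⟨v, hv⟩ := Fin.exists_eq_nat_fun x.ofLp
  rw [← x.toLp_ofLp, hv, inner_toEuclideanCLM_distMatInv_self, norm_toLp_nat_fun_sq]
  exact abs_distMatInvQuadForm_le v hn

lemma one_add_cos_le_norm_toEuclideanCLM_distMatInv (hn : 2 ≤ n) :
    1 + cos (π / n) ≤ ‖toEuclideanCLM (𝕜 := ℝ) (distMatInv n)‖ := by
  set φ := π - π / n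
  set v : ℕ → ℝ := fun k => sin (k * φ)
  set S := ∑ k ∈ range (n + 1), v k ^ 2
  have hn0 : (n : ℝ) ≠ 0 := by positivity
  have hv0 : v 0 = 0 := by simp [v]
  have hvn : v n = 0 := by
    simp only [v, φ, mul_sub, mul_div_cancel₀ π hn0, sin_sub_pi, sin_nat_mul_pi, neg_zero]
  have hS : 0 < S := by
    have hv1 : 0 < v 1 := by
      simp only [v, Nat.cast_one, one_mul, φ, sin_pi_sub]
      refine sin_pos_of_pos_of_lt_pi (by positivity) (div_lt_self pi_pos ?_)
      exact_mod_cast (by omega : 1 < n)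
    exact (pow_pos hv1 2).trans_le
      (single_le_sum (fun k _ => sq_nonneg (v k)) (mem_range.2 (by omega)))
  have hquot := (toEuclideanCLM (𝕜 := ℝ) (distMatInv n)).rayleighQuotient_le_norm
    (WithLp.toLp 2 fun i : Fin (n + 1) => v i)
  rw [ContinuousLinearMap.rayleighQuotient, ContinuousLinearMap.reApplyInnerSelf_apply,
    RCLike.re_to_real, inner_toEuclideanCLM_distMatInv_self, norm_toLp_nat_fun_sq,
    distMatInvQuadForm, hv0, hvn,
    sum_range_sub_sq_of_recurrence v (cos φ) (sin_nat_add_two_mul_add_sin_nat_mul φ) hv0 hvn,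
    cos_pi_sub] at hquot
  have hvalue : ((0 + 0) ^ 2 / (2 * n) - 2 * (1 - -cos (π / n)) * S / 2) / S =
      -(1 + cos (π / n)) := by
    field_simp
    ring
  rwa [hvalue, abs_neg, abs_of_nonneg (by linarith [neg_one_le_cos (π / n)])] at hquot

end

theorem stmt11 (n : ℕ) (hn : 0 < n) :
    IsUnit (distMat n) ∧
      2 - Real.pi ^ 2 / (2 * (n : ℝ) ^ 2) ≤
        ‖Matrix.toEuclideanCLM (𝕜 := ℝ) ((distMat n)⁻¹)‖ ∧
      ‖Matrix.toEuclideanCLM (𝕜 := ℝ) ((distMat n)⁻¹)‖ ≤ 2 := by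
  have hleft := distMatInv_mul_distMat hn
  rw [inv_eq_left_inv hleft]
  refine ⟨(isUnit_iff_isUnit_det _).2 (isUnit_det_of_left_inverse hleft), ?_,
    norm_toEuclideanCLM_distMatInv_le hn⟩
  obtain rfl | hn2 : n = 1 ∨ 2 ≤ n := by omega
  · nlinarith [pi_gt_three, norm_nonneg (toEuclideanCLM (𝕜 := ℝ) (distMatInv 1))]
  · calc 2 - π ^ 2 / (2 * (n : ℝ) ^ 2) = 1 + (1 - (π / n) ^ 2 / 2) := by ring
      _ ≤ 1 + cos (π / n) := by grw [one_sub_sq_div_two_le_cos]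
      _ ≤ _ := one_add_cos_le_norm_toEuclideanCLM_distMatInv hn2
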